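/- Let n ≥ 2 be an integer, λ > 0 a real number, and 1 ≤ q < p ≤ n integers, and define D̃_{ij} := cosh((min(i,j) − 1/2)λ)·cosh((n − max(i,j) + 1/2)λ). Then: (a) for every integer 1 ≤ j ≤ q, D̃_{jp} − D̃_{jq} = cosh((j − 1/2)λ)·(cosh((n − p + 1/2)λ) − cosh((n − q + 1/2)λ)) < 0, and j ↦ D̃_{jp} − D̃_{jq} is strictly decreasing on 1 ≤ j ≤ q; (b) for every integer p ≤ j ≤ n, D̃_{jp} − D̃_{jq} = cosh((n − j + 1/2)λ)·(cosh((p − 1/2)λ) − cosh((q − 1/2)λ)) > 0, and j ↦ D̃_{jp} − D̃_{jq} is strictly decreasing on p ≤ j ≤ n. -/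

import Mathlib

open Real Matrix Finset

noncomputable section

/-- Real inverse hyperbolic cosine. -/
def arcosh (x : ℝ) : ℝ := Real.log (x + Real.sqrt (x ^ 2 - 1))

/-- `D̃ᵢⱼ = cosh((min(i,j) − 1/2)λ)·cosh((n − max(i,j) + 1/2)λ)`. -/
def Dtil (n : ℕ) (l : ℝ) (i j : ℕ) : ℝ :=
  Real.cosh (((min i j : ℕ) - (1 : ℝ) / 2) * l) *
    Real.cosh (((n : ℝ) - (max i j : ℕ) + 1 / 2) * l)

/-!
Off the diagonal, `D̃ᵢⱼ` factors into a function of the smaller index times a function of the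
larger one. For `j ≤ q < p` the common factor `cosh((j − 1/2)λ)` can be pulled out of
`D̃ⱼₚ − D̃ⱼq`, for `q < p ≤ j` the common factor `cosh((n − j + 1/2)λ)`; the remaining
difference of two values of `cosh` has a fixed sign because `cosh` is strictly increasing on
`[0, ∞)`, and that same monotonicity, applied to the common factor, gives the strict
monotonicity in `j`.
-/

lemma cosh_mul_lt_cosh_mul {a b l : ℝ} (ha : 0 ≤ a) (hab : a < b) (hl : 0 < l) :
    cosh (a * l) < cosh (b * l) :=
  cosh_strictMonoOn (mul_nonneg ha hl.le) (mul_nonneg (ha.trans hab.le) hl.le)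
    (mul_lt_mul_of_pos_right hab hl)

lemma cosh_sub_half_mul_lt {i j : ℕ} {l : ℝ} (hi : 1 ≤ i) (hij : i < j) (hl : 0 < l) :
    cosh (((i : ℝ) - 1 / 2) * l) < cosh (((j : ℝ) - 1 / 2) * l) := by
  have hiR : (1 : ℝ) ≤ i := by exact_mod_cast hi
  have hijR : (i : ℝ) < j := by exact_mod_cast hij
  exact cosh_mul_lt_cosh_mul (by linarith) (by linarith) hl

lemma cosh_sub_add_half_mul_lt {n i j : ℕ} {l : ℝ} (hij : i < j) (hjn : j ≤ n) (hl : 0 < l) :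
    cosh (((n : ℝ) - j + 1 / 2) * l) < cosh (((n : ℝ) - i + 1 / 2) * l) := by
  have hijR : (i : ℝ) < j := by exact_mod_cast hij
  have hjnR : (j : ℝ) ≤ n := by exact_mod_cast hjn
  exact cosh_mul_lt_cosh_mul (by linarith) (by linarith) hl

lemma Dtil_of_le {n : ℕ} {l : ℝ} {i j : ℕ} (h : i ≤ j) :
    Dtil n l i j = cosh (((i : ℝ) - 1 / 2) * l) * cosh (((n : ℝ) - j + 1 / 2) * l) := by
  rw [Dtil, min_eq_left h, max_eq_right h]

lemma Dtil_of_ge {n : ℕ} {l : ℝ} {i j : ℕ} (h : j ≤ i) :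
    Dtil n l i j = cosh (((j : ℝ) - 1 / 2) * l) * cosh (((n : ℝ) - i + 1 / 2) * l) := by
  rw [Dtil, min_eq_right h, max_eq_left h]

lemma Dtil_sub_Dtil_of_le_of_le {n : ℕ} {l : ℝ} {j p q : ℕ} (hjp : j ≤ p) (hjq : j ≤ q) :
    Dtil n l j p - Dtil n l j q =
      cosh (((j : ℝ) - 1 / 2) * l) *
        (cosh (((n : ℝ) - p + 1 / 2) * l) - cosh (((n : ℝ) - q + 1 / 2) * l)) := by
  rw [Dtil_of_le hjp, Dtil_of_le hjq, mul_sub]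

lemma Dtil_sub_Dtil_of_ge_of_ge {n : ℕ} {l : ℝ} {j p q : ℕ} (hpj : p ≤ j) (hqj : q ≤ j) :
    Dtil n l j p - Dtil n l j q =
      cosh (((n : ℝ) - j + 1 / 2) * l) *
        (cosh (((p : ℝ) - 1 / 2) * l) - cosh (((q : ℝ) - 1 / 2) * l)) := by
  rw [Dtil_of_ge hpj, Dtil_of_ge hqj]
  ring

theorem Dtil_difference_properties_general
    (n : ℕ) (l : ℝ) (hl : 0 < l) (p q : ℕ)
    (hq : 1 ≤ q) (hqp : q < p) (hpn : p ≤ n) :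
    (∀ j : ℕ, 1 ≤ j → j ≤ q →
      Dtil n l j p - Dtil n l j q =
        Real.cosh (((j : ℝ) - 1 / 2) * l) *
          (Real.cosh (((n : ℝ) - (p : ℝ) + 1 / 2) * l) -
            Real.cosh (((n : ℝ) - (q : ℝ) + 1 / 2) * l)) ∧
      Dtil n l j p - Dtil n l j q < 0) ∧
    (∀ j j' : ℕ, 1 ≤ j → j < j' → j' ≤ q →
      Dtil n l j' p - Dtil n l j' q < Dtil n l j p - Dtil n l j q) ∧
    (∀ j : ℕ, p ≤ j → j ≤ n →
      Dtil n l j p - Dtil n l j q =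
        Real.cosh (((n : ℝ) - (j : ℝ) + 1 / 2) * l) *
          (Real.cosh (((p : ℝ) - 1 / 2) * l) -
            Real.cosh (((q : ℝ) - 1 / 2) * l)) ∧
      0 < Dtil n l j p - Dtil n l j q) ∧
    (∀ j j' : ℕ, p ≤ j → j < j' → j' ≤ n →
      Dtil n l j' p - Dtil n l j' q < Dtil n l j p - Dtil n l j q) := by
  have hlow : cosh (((n : ℝ) - p + 1 / 2) * l) - cosh (((n : ℝ) - q + 1 / 2) * l) < 0 :=
    sub_neg.2 (cosh_sub_add_half_mul_lt hqp hpn hl)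
  have hhigh : 0 < cosh (((p : ℝ) - 1 / 2) * l) - cosh (((q : ℝ) - 1 / 2) * l) :=
    sub_pos.2 (cosh_sub_half_mul_lt hq hqp hl)
  have formLow : ∀ {j}, j ≤ q → Dtil n l j p - Dtil n l j q = _ := fun hjq =>
    Dtil_sub_Dtil_of_le_of_le (hjq.trans hqp.le) hjq
  have formHigh : ∀ {j}, p ≤ j → Dtil n l j p - Dtil n l j q = _ := fun hpj =>
    Dtil_sub_Dtil_of_ge_of_ge hpj (hqp.le.trans hpj)
  refine ⟨fun j _ hjq => ⟨formLow hjq, ?_⟩, fun j j' hj hjj' hj'q => ?_,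
    fun j hpj _ => ⟨formHigh hpj, ?_⟩, fun j j' hpj hjj' hj'n => ?_⟩
  · rw [formLow hjq]
    exact mul_neg_of_pos_of_neg (cosh_pos _) hlow
  · rw [formLow hj'q, formLow (hjj'.le.trans hj'q)]
    exact mul_lt_mul_of_neg_right (cosh_sub_half_mul_lt hj hjj' hl) hlow
  · rw [formHigh hpj]
    exact mul_pos (cosh_pos _) hhigh
  · rw [formHigh (hpj.trans hjj'.le), formHigh hpj]
    exact mul_lt_mul_of_pos_right (cosh_sub_add_half_mul_lt hjj' hj'n hl) hhigh

/-- The exception-induced rank perturbation direction `D̃ⱼₚ − D̃ⱼq`: its closed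
form, sign, and strict monotonicity on each transitive section. -/
theorem Dtil_difference_properties
    (n : ℕ) (hn : 2 ≤ n) (l : ℝ) (hl : 0 < l) (p q : ℕ)
    (hq : 1 ≤ q) (hqp : q < p) (hpn : p ≤ n) :
    (∀ j : ℕ, 1 ≤ j → j ≤ q →
      Dtil n l j p - Dtil n l j q =
        Real.cosh (((j : ℝ) - 1 / 2) * l) *
          (Real.cosh (((n : ℝ) - (p : ℝ) + 1 / 2) * l) -
            Real.cosh (((n : ℝ) - (q : ℝ) + 1 / 2) * l)) ∧
      Dtil n l j p - Dtil n l j q < 0) ∧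
    (∀ j j' : ℕ, 1 ≤ j → j < j' → j' ≤ q →
      Dtil n l j' p - Dtil n l j' q < Dtil n l j p - Dtil n l j q) ∧
    (∀ j : ℕ, p ≤ j → j ≤ n →
      Dtil n l j p - Dtil n l j q =
        Real.cosh (((n : ℝ) - (j : ℝ) + 1 / 2) * l) *
          (Real.cosh (((p : ℝ) - 1 / 2) * l) -
            Real.cosh (((q : ℝ) - 1 / 2) * l)) ∧
      0 < Dtil n l j p - Dtil n l j q) ∧
    (∀ j j' : ℕ, p ≤ j → j < j' → j' ≤ n →
      Dtil n l j' p - Dtil n l j' q < Dtil n l j p - Dtil n l j q) :=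
  Dtil_difference_properties_general n l hl p q hq hqp hpn
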